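/- Let C_{−1} = x + Σ_{n≥2} (−1)^n (n−1)^{n−2} x^n/n! ∈ ℚ[[x]]. Then (C_{−1} − x) ∘ (x·e^x) = Σ_{n≥2} (n−1)^2 x^n/n!; that is, substituting x·e^x into C_{−1} − x yields the exponential generating series whose n-th coefficient is (n−1)^2/n! for n ≥ 2 and 0 otherwise. -/

import Mathlib

/-- Substitution of the power series `g` (with zero constant coefficient) into `f`. -/
noncomputable def psubst (g f : PowerSeries ℚ) : PowerSeries ℚ :=
  PowerSeries.mk fun n =>
    ∑ k ∈ Finset.range (n + 1), PowerSeries.coeff k f * PowerSeries.coeff n (g ^ k)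

/-- `C₋₁ = x + Σ_{n≥2} (-1)ⁿ (n-1)^(n-2) xⁿ/n!`. -/
noncomputable def Cm1 : PowerSeries ℚ :=
  PowerSeries.X + PowerSeries.mk (fun n =>
    if n < 2 then 0 else (-1) ^ n * ((n : ℚ) - 1) ^ (n - 2) / n.factorial)

/-!
After multiplying the `n`-th coefficient by `n!` and putting `n = e + 2`, the claim reads
`∑ₗ (-1)ˡ C(e+2, l+2) (l+1)ˡ (l+2)^(e-l) = (e+1)²`. Expand `(l+2)^(e-l) = ((l+1) + 1)^(e-l)`
and regroup by the total exponent `t` of `l + 1`, using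
`C(e+2, l+2) C(e-l, i) = C(e+2, t+2) C(t+2, l+2)`. The inner sum over `l` is the alternating
binomial sum `∑ₖ (-1)ᵏ C(t+2, k) (k-1)^t`, a vanishing `(t+2)`-nd finite difference of a
polynomial of degree `t`, with its terms `k = 0, 1` removed; so only those two terms survive.
-/

open Finset PowerSeries Nat

section FiniteDifferences

variable {R : Type*} [CommRing R]

theorem sum_neg_one_pow_mul_choose_mul_add_pow_eq_zero (a : R) {d m : ℕ} (h : d < m) :
    ∑ k ∈ range (m + 1), (-1) ^ k * (m.choose k : R) * (a + k) ^ d = 0 := by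
  have hΔ := congr_fun (fwdDiff_iter_pow_eq_zero_of_lt (R := R) h) a
  rw [fwdDiff_iter_eq_sum_shift, Pi.zero_apply] at hΔ
  calc ∑ k ∈ range (m + 1), (-1) ^ k * (m.choose k : R) * (a + k) ^ d
      = (-1) ^ m * ∑ k ∈ range (m + 1),
          ((-1 : ℤ) ^ (m - k) * m.choose k) • (a + k • (1 : R)) ^ d := by
        rw [mul_sum]
        refine sum_congr rfl fun k hk => ?_
        obtain ⟨j, rfl⟩ := Nat.exists_eq_add_of_le (Nat.lt_succ_iff.mp (mem_range.mp hk))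
        have hsign : (-1 : R) ^ (k + j) * (-1) ^ j = (-1) ^ k := by
          rw [pow_add, mul_assoc, ← pow_add, ← two_mul, pow_mul, neg_one_sq, one_pow, mul_one]
        rw [zsmul_eq_mul, nsmul_one, Nat.add_sub_cancel_left, ← hsign]
        push_cast
        ring
    _ = 0 := by rw [hΔ, mul_zero]

theorem sum_neg_one_pow_mul_choose_add_two_mul_pow (t : ℕ) :
    ∑ l ∈ range (t + 1), (-1) ^ l * ((t + 2).choose (l + 2) : R) * ((l : R) + 1) ^ t
      = ((t : R) + 2) * 0 ^ t - (-1) ^ t := by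
  have h := sum_neg_one_pow_mul_choose_mul_add_pow_eq_zero (-1 : R)
    (Nat.lt_add_of_pos_right (n := t) two_pos)
  rw [sum_range_succ' _ (t + 2), sum_range_succ' _ (t + 1),
    sum_congr rfl (g := fun l => (-1) ^ l * ((t + 2).choose (l + 2) : R) * ((l : R) + 1) ^ t)
      fun l _ => by push_cast; ring] at h
  simp only [zero_add, pow_one, choose_one_right, cast_add, cast_ofNat, neg_mul, one_mul,
    neg_add_rev, cast_one, neg_add_cancel, pow_zero, choose_zero_right, mul_one, cast_zero,
    add_zero] at h
  linear_combination h

theorem sum_choose_add_two_mul_neg_one_pow (e : ℕ) :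
    ∑ t ∈ range (e + 1), ((e + 2).choose (t + 2) : R) * (-1) ^ t = e + 1 := by
  have h := sum_neg_one_pow_mul_choose_mul_add_pow_eq_zero (0 : R) (Nat.add_pos_right e two_pos)
  rw [sum_range_succ' _ (e + 2), sum_range_succ' _ (e + 1),
    sum_congr rfl (g := fun t => ((e + 2).choose (t + 2) : R) * (-1) ^ t)
      fun t _ => by ring] at h
  simp only [zero_add, pow_one, choose_one_right, cast_add, cast_ofNat, neg_mul, one_mul,
    neg_add_rev, cast_one, pow_zero, mul_one, choose_zero_right, cast_zero, add_zero] at h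
  linear_combination h

theorem choose_two_mul_two (n : ℕ) : ((n + 2).choose 2 : R) * 2 = (n + 2) * (n + 1) := by
  have h : (n + 2).choose 2 * 2 = (n + 2) * (n + 1) := by
    simpa using (Nat.add_one_mul_choose_eq (n + 1) 1).symm
  simpa using congrArg (Nat.cast (R := R)) h

theorem sum_neg_one_pow_mul_choose_mul_pow_mul_pow (e : ℕ) :
    ∑ l ∈ range (e + 1),
        (-1) ^ l * ((e + 2).choose (l + 2) : R) * ((l : R) + 1) ^ l * ((l : R) + 2) ^ (e - l)
      = ((e : R) + 1) ^ 2 := by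
  let f : ℕ → ℕ → R := fun l i => ((e + 2).choose (l + 2 + i) : R) *
    ((-1) ^ l * ((l + 2 + i).choose (l + 2) : R) * ((l : R) + 1) ^ (l + i))
  calc _ = ∑ l ∈ range (e + 1), ∑ i ∈ range (e + 1 - l), f l i := by
        refine sum_congr rfl fun l hl => ?_
        have hle : l ≤ e := Nat.lt_succ_iff.mp (mem_range.mp hl)
        rw [show (l : R) + 2 = (l + 1) + 1 by ring, add_pow ((l : R) + 1) 1, mul_sum,
          ← Nat.sub_add_comm hle]
        refine sum_congr rfl fun i _ => ?_
        have hchoose := Nat.choose_mul (n := e + 2) (Nat.le_add_right (l + 2) i)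
        rw [add_tsub_cancel_left, Nat.add_sub_add_right] at hchoose
        have hcast := congrArg (Nat.cast (R := R)) hchoose
        push_cast at hcast
        linear_combination (-(-1) ^ l * ((l : R) + 1) ^ (l + i)) * hcast
    _ = ∑ t ∈ range (e + 1), ∑ l ∈ range (t + 1), f l (t - l) := (sum_range_diag_flip _ _).symm
    _ = ∑ t ∈ range (e + 1), ((e + 2).choose (t + 2) : R) *
          ∑ l ∈ range (t + 1), (-1) ^ l * ((t + 2).choose (l + 2) : R) * ((l : R) + 1) ^ t := by
        refine sum_congr rfl fun t _ => ?_
        rw [mul_sum]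
        refine sum_congr rfl fun l hl => ?_
        have hlt : l ≤ t := Nat.lt_succ_iff.mp (mem_range.mp hl)
        simp only [f, Nat.add_sub_cancel' hlt, show l + 2 + (t - l) = t + 2 by omega]
    _ = ∑ t ∈ range (e + 1), ((e + 2).choose (t + 2) : R) * (((t : R) + 2) * 0 ^ t - (-1) ^ t) := by
        simp_rw [sum_neg_one_pow_mul_choose_add_two_mul_pow]
    _ = ((e : R) + 1) ^ 2 := by
        simp_rw [mul_sub, sum_sub_distrib, sum_choose_add_two_mul_neg_one_pow]
        rw [sum_eq_single 0 (fun t _ ht => by simp [ht]) (by simp)]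
        linear_combination choose_two_mul_two (R := R) e

end FiniteDifferences

theorem coeff_X_mul_exp_pow (n k : ℕ) :
    coeff n ((X * exp ℚ) ^ k) = if k ≤ n then (k : ℚ) ^ (n - k) / (n - k)! else 0 := by
  rw [mul_pow, coeff_X_pow_mul', exp_pow_eq_rescale_exp]
  split_ifs
  · simp [coeff_rescale, coeff_exp, div_eq_mul_inv]
  · rfl

theorem factorial_mul_coeff_psubst_X_mul_exp (f : PowerSeries ℚ) (n : ℕ) :
    n ! * coeff n (psubst (X * exp ℚ) f)
      = ∑ k ∈ range (n + 1), (n.choose k : ℚ) * (k ! * coeff k f) * (k : ℚ) ^ (n - k) := by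
  rw [psubst, coeff_mk, mul_sum]
  refine sum_congr rfl fun k hk => ?_
  have hkn : k ≤ n := Nat.lt_succ_iff.mp (mem_range.mp hk)
  rw [coeff_X_mul_exp_pow, if_pos hkn, Nat.cast_choose ℚ hkn]
  field_simp

theorem factorial_mul_coeff_Cm1_sub_X (k : ℕ) :
    k ! * coeff k (Cm1 - X) = if k < 2 then 0 else (-1) ^ k * ((k : ℚ) - 1) ^ (k - 2) := by
  rw [Cm1, add_sub_cancel_left, coeff_mk]
  split_ifs
  · rw [mul_zero]
  · field_simp

theorem Ca0_eq :
    psubst (PowerSeries.X * PowerSeries.exp ℚ) (Cm1 - PowerSeries.X)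
      = PowerSeries.mk (fun n => if n < 2 then 0 else ((n : ℚ) - 1) ^ 2 / n.factorial) := by
  ext n
  apply mul_left_cancel₀ (Nat.cast_ne_zero.mpr n.factorial_ne_zero : (n ! : ℚ) ≠ 0)
  rw [factorial_mul_coeff_psubst_X_mul_exp, coeff_mk]
  simp_rw [factorial_mul_coeff_Cm1_sub_X]
  obtain _ | _ | e := n
  · simp
  · simp [sum_range_succ]
  rw [sum_range_succ' _ (e + 2), sum_range_succ' _ (e + 1), if_pos (by norm_num),
    if_pos (by norm_num), if_neg (by omega)]
  simp only [mul_zero, zero_mul, add_zero]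
  calc _ = ∑ l ∈ range (e + 1),
        (-1) ^ l * ((e + 2).choose (l + 2) : ℚ) * ((l : ℚ) + 1) ^ l * ((l : ℚ) + 2) ^ (e - l) := by
        refine sum_congr rfl fun l _ => ?_
        rw [if_neg (by omega), Nat.add_sub_add_right, Nat.add_sub_cancel]
        push_cast
        ring
    _ = _ := by
        rw [sum_neg_one_pow_mul_choose_mul_pow_mul_pow]
        push_cast
        field_simp
        ring
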